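/- Let A and B be nonempty finite types, δ ∈ [0,1], b₀ ∈ B, and let W be a unitary on EuclideanSpace ℂ (A × B). Suppose that for every a ∈ A there is a unit vector χ_a ∈ EuclideanSpace ℂ B with ‖W(e_a ⊗ e_{b₀}) − e_a ⊗ χ_a‖ ≤ √δ, and that ‖χ_a − χ_{a'}‖ ≤ 4·δ^{1/4} for all a, a' ∈ A. Then for every unit vector ψ ∈ EuclideanSpace ℂ A, ‖(⟨ψ| ⊗ I)(W(ψ ⊗ e_{b₀}))‖² ≥ 1 − 10·√(card A)·δ^{1/4}. (Lemma 5.6 of the paper: if a unitary acts almost as the identity on every computational basis state with nearly identical ancilla outputs, then it acts almost as the identity on every input state; with card A = 2^n this is the bound 1 − 10·2^{n/2}·δ^{1/4}.) -/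

import Mathlib

/-- Pure tensor: `(u ⊗ w)(a, b) = u a * w b`. -/
def tens {A B : Type*} (u : EuclideanSpace ℂ A) (w : EuclideanSpace ℂ B) :
    EuclideanSpace ℂ (A × B) :=
  WithLp.toLp 2 (fun p : A × B => u p.1 * w p.2)

/-- Partial inner product: `(⟨u|⊗I)v (b) = Σ_a conj (u a) * v (a, b)`. -/
noncomputable def pinner {A B : Type*} [Fintype A] (u : EuclideanSpace ℂ A)
    (v : EuclideanSpace ℂ (A × B)) : EuclideanSpace ℂ B :=
  WithLp.toLp 2 (fun b => ∑ a, (starRingEnd ℂ) (u a) * v (a, b))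

/-!
Expanding `ψ ⊗ e_{b₀} = ∑ a, ψ a • (e_a ⊗ e_{b₀})` and using linearity, `W (ψ ⊗ e_{b₀})` lies
within `(∑ a, ‖ψ a‖) √δ ≤ √(card A) δ^{1/2}` of `∑ a, ψ a • (e_a ⊗ χ_a)`. The summands of the
latter are orthogonal, so it lies within `4 δ^{1/4}` of `ψ ⊗ χ_{a₀}`. Contraction with `⟨ψ|` is
`1`-Lipschitz and maps `ψ ⊗ χ_{a₀}` to the unit vector `χ_{a₀}`, so the contracted vector has
norm at least `1 - ε` with `ε ≤ 5 √(card A) δ^{1/4}`, and its square is at least `1 - 2ε`.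
-/

open Finset

section

variable {A B : Type*}

theorem tens_sub_right (u : EuclideanSpace ℂ A) (w w' : EuclideanSpace ℂ B) :
    tens u (w - w') = tens u w - tens u w' := by
  ext p
  simp [tens, mul_sub]

variable [Fintype A]

theorem sum_smul_tens_single_apply [DecidableEq A] (ψ : EuclideanSpace ℂ A)
    (w : A → EuclideanSpace ℂ B) (p : A × B) :
    (∑ a, ψ a • tens (EuclideanSpace.single a 1) (w a)) p = ψ p.1 * w p.1 p.2 := by
  simp [WithLp.ofLp_sum, tens]

theorem tens_eq_sum_smul_tens_single [DecidableEq A] (ψ : EuclideanSpace ℂ A)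
    (w : EuclideanSpace ℂ B) :
    tens ψ w = ∑ a, ψ a • tens (EuclideanSpace.single a 1) w := by
  ext p
  rw [sum_smul_tens_single_apply]
  rfl

theorem pinner_sub (u : EuclideanSpace ℂ A) (v w : EuclideanSpace ℂ (A × B)) :
    pinner u (v - w) = pinner u v - pinner u w := by
  ext b
  simp [pinner, mul_sub, sum_sub_distrib]

theorem pinner_tens_self {u : EuclideanSpace ℂ A} (hu : ‖u‖ = 1) (w : EuclideanSpace ℂ B) :
    pinner u (tens u w) = w := by
  have h : ∑ a, (starRingEnd ℂ) (u a) * u a = 1 := by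
    have := inner_self_eq_norm_sq_to_K (𝕜 := ℂ) u
    rw [hu, PiLp.inner_apply] at this
    simpa [Complex.conj_mul'] using this
  ext b
  simp only [pinner, tens, PiLp.toLp_apply, ← mul_assoc, ← sum_mul, h, one_mul]

theorem sum_norm_le_sqrt_card_mul_norm {𝕜 : Type*} [RCLike 𝕜] (ψ : EuclideanSpace 𝕜 A) :
    ∑ a, ‖ψ a‖ ≤ √(Fintype.card A) * ‖ψ‖ := by
  calc ∑ a, ‖ψ a‖ = ∑ a, 1 * ‖ψ a‖ := by simp
    _ ≤ √(∑ _a : A, 1 ^ 2) * √(∑ a, ‖ψ a‖ ^ 2) := Real.sum_mul_le_sqrt_mul_sqrt _ _ _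
    _ = √(Fintype.card A) * ‖ψ‖ := by simp [EuclideanSpace.norm_eq]

theorem norm_map_tens_sub_sum_smul_le [DecidableEq A] {E F : Type*} [NormedAddCommGroup E]
    [NormedSpace ℂ E] [FunLike F (EuclideanSpace ℂ (A × B)) E]
    [LinearMapClass F ℂ (EuclideanSpace ℂ (A × B)) E]
    (W : F) (w : EuclideanSpace ℂ B) (g : A → E) {ε : ℝ}
    (hg : ∀ a, ‖W (tens (EuclideanSpace.single a 1) w) - g a‖ ≤ ε) (ψ : EuclideanSpace ℂ A) :
    ‖W (tens ψ w) - ∑ a, ψ a • g a‖ ≤ (∑ a, ‖ψ a‖) * ε := by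
  rw [tens_eq_sum_smul_tens_single ψ w, map_sum]
  simp_rw [map_smul, ← sum_sub_distrib, ← smul_sub, sum_mul]
  refine (norm_sum_le _ _).trans (sum_le_sum fun a _ => ?_)
  rw [norm_smul]
  gcongr
  exact hg a

variable [Fintype B]

theorem norm_sq_sum_smul_tens_single [DecidableEq A] (ψ : EuclideanSpace ℂ A)
    (w : A → EuclideanSpace ℂ B) :
    ‖∑ a, ψ a • tens (EuclideanSpace.single a 1) (w a)‖ ^ 2 = ∑ a, ‖ψ a‖ ^ 2 * ‖w a‖ ^ 2 := by
  simp_rw [EuclideanSpace.norm_sq_eq, Fintype.sum_prod_type, sum_smul_tens_single_apply, norm_mul,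
    mul_pow, ← mul_sum]

theorem norm_sum_smul_tens_single_sub_tens_le [DecidableEq A] (ψ : EuclideanSpace ℂ A)
    (χ : A → EuclideanSpace ℂ B) (χ₀ : EuclideanSpace ℂ B) {η : ℝ} (hη : 0 ≤ η)
    (hχ : ∀ a, ‖χ a - χ₀‖ ≤ η) :
    ‖∑ a, ψ a • tens (EuclideanSpace.single a 1) (χ a) - tens ψ χ₀‖ ≤ ‖ψ‖ * η := by
  rw [tens_eq_sum_smul_tens_single ψ χ₀, ← sum_sub_distrib]
  simp_rw [← smul_sub, ← tens_sub_right]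
  refine le_of_sq_le_sq ?_ (by positivity)
  rw [norm_sq_sum_smul_tens_single, mul_pow, EuclideanSpace.norm_sq_eq, sum_mul]
  gcongr with a
  exact hχ a

theorem norm_pinner_le (u : EuclideanSpace ℂ A) (v : EuclideanSpace ℂ (A × B)) :
    ‖pinner u v‖ ≤ ‖u‖ * ‖v‖ := by
  let slice (b : B) : EuclideanSpace ℂ A := WithLp.toLp 2 fun a => v (a, b)
  have pinner_eq_inner (b : B) : pinner u v b = inner ℂ u (slice b) := by
    simp [pinner, slice, PiLp.inner_apply, mul_comm]
  have norm_sq_v : ‖v‖ ^ 2 = ∑ b, ‖slice b‖ ^ 2 := by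
    simp_rw [EuclideanSpace.norm_sq_eq, Fintype.sum_prod_type_right]
    rfl
  refine le_of_sq_le_sq ?_ (by positivity)
  calc ‖pinner u v‖ ^ 2 = ∑ b, ‖inner ℂ u (slice b)‖ ^ 2 := by
        simp_rw [EuclideanSpace.norm_sq_eq, pinner_eq_inner]
    _ ≤ ∑ b, (‖u‖ * ‖slice b‖) ^ 2 := by
        gcongr with b
        exact norm_inner_le_norm _ _
    _ = (‖u‖ * ‖v‖) ^ 2 := by simp_rw [mul_pow, norm_sq_v, mul_sum]

theorem one_sub_two_mul_le_norm_pinner_sq {ψ : EuclideanSpace ℂ A} (hψ : ‖ψ‖ = 1)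
    {χ : EuclideanSpace ℂ B} (hχ : ‖χ‖ = 1) {v : EuclideanSpace ℂ (A × B)} {ε : ℝ}
    (hv : ‖v - tens ψ χ‖ ≤ ε) :
    1 - 2 * ε ≤ ‖pinner ψ v‖ ^ 2 := by
  have hclose : ‖pinner ψ v - χ‖ ≤ ε :=
    calc ‖pinner ψ v - χ‖ = ‖pinner ψ (v - tens ψ χ)‖ := by rw [pinner_sub, pinner_tens_self hψ]
      _ ≤ ‖v - tens ψ χ‖ := by simpa [hψ] using norm_pinner_le ψ (v - tens ψ χ)
      _ ≤ ε := hv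
  have hlower : 1 - ε ≤ ‖pinner ψ v‖ := by
    have := norm_sub_norm_le χ (pinner ψ v)
    rw [hχ, norm_sub_rev] at this
    linarith
  nlinarith [norm_nonneg (pinner ψ v - χ), norm_nonneg (pinner ψ v)]

end

theorem near_identity_on_all_states_general {A B : Type*} [Fintype A] [Fintype B]
    [DecidableEq A] [DecidableEq B] [Nonempty A]
    (δ : ℝ) (hδ0 : 0 ≤ δ) (hδ1 : δ ≤ 1) (b₀ : B)
    (W : EuclideanSpace ℂ (A × B) ≃ₗᵢ[ℂ] EuclideanSpace ℂ (A × B))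
    (χ : A → EuclideanSpace ℂ B) (hχ : ∀ a, ‖χ a‖ = 1)
    (happrox : ∀ a,
      ‖W (tens (EuclideanSpace.single a 1) (EuclideanSpace.single b₀ 1)) -
        tens (EuclideanSpace.single a 1) (χ a)‖ ≤ Real.sqrt δ)
    (hclose : ∀ a a', ‖χ a - χ a'‖ ≤ 4 * δ ^ ((1 : ℝ) / 4)) :
    ∀ ψ : EuclideanSpace ℂ A, ‖ψ‖ = 1 →
      1 - 10 * Real.sqrt (Fintype.card A) * δ ^ ((1 : ℝ) / 4) ≤
        ‖pinner ψ (W (tens ψ (EuclideanSpace.single b₀ 1)))‖ ^ 2 := by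
  intro ψ hψ
  obtain ⟨a₀⟩ := ‹Nonempty A›
  set t := δ ^ ((1 : ℝ) / 4)
  set c := √(Fintype.card A : ℝ)
  have ht0 : 0 ≤ t := by positivity
  have ht1 : t ≤ 1 := Real.rpow_le_one hδ0 hδ1 (by norm_num)
  have hsqrt : √δ = t ^ 2 := by
    rw [Real.sqrt_eq_rpow, ← Real.rpow_natCast, ← Real.rpow_mul hδ0]
    norm_num
  have hc : 1 ≤ c := Real.one_le_sqrt.mpr (by exact_mod_cast Fintype.card_pos)
  have hsum : ∑ a, ‖ψ a‖ ≤ c := by simpa [hψ] using sum_norm_le_sqrt_card_mul_norm ψ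
  have hW := norm_map_tens_sub_sum_smul_le W _ _ happrox ψ
  have hχ₀ := norm_sum_smul_tens_single_sub_tens_le ψ χ (χ a₀) (by positivity) (hclose · a₀)
  have hε : (∑ a, ‖ψ a‖) * √δ + ‖ψ‖ * (4 * t) ≤ 5 * c * t := by
    rw [hsqrt, hψ]
    nlinarith [mul_nonneg (sub_nonneg.mpr hsum) (sq_nonneg t),
      mul_nonneg (mul_nonneg (zero_le_one.trans hc) ht0) (sub_nonneg.mpr ht1),
      mul_nonneg (sub_nonneg.mpr hc) ht0]
  have := one_sub_two_mul_le_norm_pinner_sq hψ (hχ a₀)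
    ((norm_sub_le_norm_sub_add_norm_sub _ _ _).trans ((add_le_add hW hχ₀).trans hε))
  linarith

/-- If a unitary acts almost as the identity on every computational basis
state with nearly identical ancilla outputs, then it acts almost as the
identity on every input state:
`‖(⟨ψ|⊗I)(W(ψ ⊗ e_{b₀}))‖² ≥ 1 − 10·√(card A)·δ^{1/4}`. -/
theorem near_identity_on_all_states {A B : Type*} [Fintype A] [Fintype B]
    [DecidableEq A] [DecidableEq B] [Nonempty A] [Nonempty B]
    (δ : ℝ) (hδ0 : 0 ≤ δ) (hδ1 : δ ≤ 1) (b₀ : B)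
    (W : EuclideanSpace ℂ (A × B) ≃ₗᵢ[ℂ] EuclideanSpace ℂ (A × B))
    (χ : A → EuclideanSpace ℂ B) (hχ : ∀ a, ‖χ a‖ = 1)
    (happrox : ∀ a,
      ‖W (tens (EuclideanSpace.single a 1) (EuclideanSpace.single b₀ 1)) -
        tens (EuclideanSpace.single a 1) (χ a)‖ ≤ Real.sqrt δ)
    (hclose : ∀ a a', ‖χ a - χ a'‖ ≤ 4 * δ ^ ((1 : ℝ) / 4)) :
    ∀ ψ : EuclideanSpace ℂ A, ‖ψ‖ = 1 →
      1 - 10 * Real.sqrt (Fintype.card A) * δ ^ ((1 : ℝ) / 4) ≤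
        ‖pinner ψ (W (tens ψ (EuclideanSpace.single b₀ 1)))‖ ^ 2 :=
  near_identity_on_all_states_general δ hδ0 hδ1 b₀ W χ hχ happrox hclose
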